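/- arXiv:1501.06872 — 9 statements merged into one kernel-verified Lean document; each statement's English description precedes it below -/
import Mathlib

section
/- Suppose that for every integer n ≥ 2 and every nonempty subset A of Z_n \ {0} whose elements sum to a nonzero value, there exists an ordering (a_1, ..., a_k) of the elements of A such that the partial sums s_j = a_1 + ... + a_j (j = 1, ..., k), computed in Z_n, are pairwise distinct and all nonzero. Then for every integer n ≥ 2 and every nonempty subset A of Z_n \ {0}, there exists an ordering of the elements of A such that all the partial sums are pairwise distinct. -/
/-!
If the elements of `A` do not sum to zero, the hypothesis applies to `A` itself. Otherwise pick
`a ∈ A`: the rest `A \ {a}` sums to `-a ≠ 0`, so it has an ordering whose partial sums are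
distinct and nonzero, and appending `a` adds the final partial sum `0`, which is new.
-/

/-- The partial sums of the ordering `l` are pairwise distinct. -/
def distinctPartialSums {n : ℕ} (l : List (ZMod n)) : Prop :=
  ∀ i j : ℕ, i < j → j < l.length → (l.take (i + 1)).sum ≠ (l.take (j + 1)).sum

lemma distinctPartialSums_append_singleton {n : ℕ} {l : List (ZMod n)} {a : ZMod n}
    (hl : distinctPartialSums l) (hlast : ∀ j < l.length, (l.take (j + 1)).sum ≠ l.sum + a) :
    distinctPartialSums (l ++ [a]) := by
  intro i j hij hj
  have htake : ∀ k < l.length, (l ++ [a]).take (k + 1) = l.take (k + 1) := fun k hk =>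
    List.take_append_of_le_length hk
  rw [List.length_append, List.length_singleton] at hj
  have hi : i < l.length := by omega
  rw [htake i hi]
  rcases Nat.lt_or_ge j l.length with hjl | hjl
  · rw [htake j hjl]
    exact hl i j hij hjl
  · have hall : (l ++ [a]).length ≤ j + 1 := by
      rw [List.length_append, List.length_singleton]
      omega
    rw [List.take_of_length_le hall, List.sum_append, List.sum_singleton]
    exact hlast i hi

lemma List.nodup_append_singleton_toFinset_eq {α : Type*} [DecidableEq α] {l : List α}
    {A : Finset α} {a : α} (hnd : l.Nodup) (hl : l.toFinset = A.erase a) (ha : a ∈ A) :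
    (l ++ [a]).Nodup ∧ (l ++ [a]).toFinset = A := by
  have hal : a ∉ l := fun h => Finset.notMem_erase a A (hl ▸ List.mem_toFinset.mpr h)
  refine ⟨List.nodup_append.mpr ⟨hnd, List.nodup_singleton a, ?_⟩, ?_⟩
  · rintro x hx y hy rfl
    exact hal (List.mem_singleton.mp hy ▸ hx)
  · rw [List.toFinset_append, hl, List.toFinset_cons, List.toFinset_nil, Finset.union_insert,
      Finset.union_empty, Finset.insert_erase ha]

/-- Alspach's conjecture (distinct *and nonzero* partial sums, for subsets with
nonzero total sum) implies the conjecture that every subset of `ZMod n \ {0}`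
admits an ordering with pairwise distinct partial sums. -/
theorem alspach_implies_distinct_partial_sums
    (H : ∀ n : ℕ, 2 ≤ n → ∀ A : Finset (ZMod n), A.Nonempty → (0 : ZMod n) ∉ A →
      (∑ a ∈ A, a) ≠ 0 →
      ∃ l : List (ZMod n), l.Nodup ∧ l.toFinset = A ∧ distinctPartialSums l ∧
        ∀ j : ℕ, j < l.length → (l.take (j + 1)).sum ≠ 0) :
    ∀ n : ℕ, 2 ≤ n → ∀ A : Finset (ZMod n), A.Nonempty → (0 : ZMod n) ∉ A →
      ∃ l : List (ZMod n), l.Nodup ∧ l.toFinset = A ∧ distinctPartialSums l := by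
  intro n hn A hA h0
  by_cases hs : ∑ a ∈ A, a = 0
  · obtain ⟨a, ha⟩ := hA
    have hsum : ∑ x ∈ A.erase a, x = -a := by rw [Finset.sum_erase_eq_sub ha, hs, zero_sub]
    have hsum_ne : ∑ x ∈ A.erase a, x ≠ 0 := by
      rw [hsum, neg_ne_zero]
      exact ne_of_mem_of_not_mem ha h0
    obtain ⟨l, hnd, htf, hdps, hnz⟩ := H n hn (A.erase a)
      (Finset.nonempty_of_sum_ne_zero hsum_ne) (fun h => h0 (Finset.mem_of_mem_erase h)) hsum_ne
    have hl_sum : l.sum + a = 0 := by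
      have : l.sum = -a := by simpa [htf, hsum] using (List.sum_toFinset id hnd).symm
      rw [this, neg_add_cancel]
    obtain ⟨hnd', htf'⟩ := List.nodup_append_singleton_toFinset_eq hnd htf ha
    exact ⟨l ++ [a], hnd', htf', distinctPartialSums_append_singleton hdps (hl_sum ▸ hnz)⟩
  · obtain ⟨l, hnd, htf, hdps, -⟩ := H n hn A hA h0 hs
    exact ⟨l, hnd, htf, hdps⟩
end

section
/- Let n ≥ 2 be an integer and let A be a nonempty subset of Z_n \ {0} with |A| ≤ 5. Then there exists an ordering (a_1, ..., a_k) of the elements of A such that the partial sums s_j = a_1 + ... + a_j (j = 1, ..., k) are pairwise distinct in Z_n. -/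
/-!
The partial sums of `a :: l` are `a` plus the partial sums `0, s₁, …, sₖ` of `l`, so the first
term is free and the rest must be ordered with no block of consecutive terms summing to zero.
Choose the first term so that the remaining `k ≤ 4` terms have nonzero total. Singletons and
the full block are then harmless, so for `k ≤ 3` it remains to keep negatives apart, and for
`k = 4` also to keep the element equal to the total (if there is one) away from both ends, since a
block of three is the total minus an end term. As `-m` is unique, pairs summing to zero form a
matching and such an arrangement always exists.
-/

open List

theorem distinctPartialSums_cons_iff {n : ℕ} {a : ZMod n} {l : List (ZMod n)} :
    distinctPartialSums (a :: l) ↔ l.partialSums.Nodup := by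
  rw [nodup_iff_pairwise_ne, pairwise_iff_getElem]
  simp only [distinctPartialSums, length_cons, length_partialSums, getElem_partialSums,
    take_succ_cons, sum_cons, ne_eq, add_right_inj]
  constructor
  · intro h i j hi hj hij
    exact h i j hij (by omega)
  · intro h i j hij hj
    exact h i j (by omega) (by omega) hij

theorem exists_perm_cons_notMem {α : Type*} [DecidableEq α] {u : List α} (hu : u.Nodup)
    (hne : u ≠ []) (s : α) : ∃ m v, u ~ m :: v ∧ s ∉ v := by
  by_cases hs : s ∈ u
  · exact ⟨s, u.erase s, perm_cons_erase hs, hu.not_mem_erase⟩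
  obtain ⟨m, v, rfl⟩ := exists_cons_of_ne_nil hne
  exact ⟨m, v, .refl _, fun h => hs (mem_cons_of_mem m h)⟩

section AddCommGroup

variable {G : Type*} [AddCommGroup G]

theorem nodup_partialSums_cons {a : G} {l : List G} :
    (a :: l).partialSums.Nodup ↔ (∀ s ∈ l.partialSums, a + s ≠ 0) ∧ l.partialSums.Nodup := by
  rw [partialSums_cons, nodup_cons, nodup_map_iff (add_right_injective a)]
  simp

theorem nodup_partialSums_three {x y z : G} (hx : x ≠ 0) (hy : y ≠ 0) (hz : z ≠ 0)
    (hxy : x + y ≠ 0) (hyz : y + z ≠ 0) (hxyz : x + y + z ≠ 0) :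
    [x, y, z].partialSums.Nodup := by
  simp only [nodup_partialSums_cons]
  simp only [partialSums_cons, partialSums_nil, map_cons, map_nil, forall_mem_cons, add_zero]
  grind

/-- A block of three consecutive terms sums to zero exactly when the remaining end term equals
the total. -/
theorem nodup_partialSums_four {q r s t : G} (hq : q ≠ 0) (hr : r ≠ 0) (hs : s ≠ 0) (ht : t ≠ 0)
    (hqr : q + r ≠ 0) (hrs : r + s ≠ 0) (hst : s + t ≠ 0) (hsum : q + r + s + t ≠ 0)
    (hq_sum : q ≠ q + r + s + t) (ht_sum : t ≠ q + r + s + t) :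
    [q, r, s, t].partialSums.Nodup := by
  simp only [nodup_partialSums_cons]
  simp only [partialSums_cons, partialSums_nil, map_cons, map_nil, forall_mem_cons, add_zero]
  grind

theorem exists_perm_nodup_partialSums_three {x y z : G} (hnd : [x, y, z].Nodup)
    (h0 : 0 ∉ [x, y, z]) (hsum : x + y + z ≠ 0) :
    ∃ t, t ~ [x, y, z] ∧ t.partialSums.Nodup := by
  simp only [nodup_cons, mem_cons, not_mem_nil, or_false, not_or, nodup_nil] at hnd
  obtain ⟨hx, hy, hz⟩ : x ≠ 0 ∧ y ≠ 0 ∧ z ≠ 0 := by simpa [eq_comm] using h0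
  by_cases hxy : x + y = 0
  · exact ⟨[x, z, y], .cons _ (.swap _ _ _),
      nodup_partialSums_three hx hz hy (by grind) (by grind) (by grind)⟩
  by_cases hyz : y + z = 0
  · exact ⟨[y, x, z], .swap _ _ _,
      nodup_partialSums_three hy hx hz (by grind) (by grind) (by grind)⟩
  exact ⟨[x, y, z], .refl _, nodup_partialSums_three hx hy hz hxy hyz hsum⟩

theorem exists_perm_adjacent_add_ne_zero {m x y z : G} (hnd : [m, x, y, z].Nodup) :
    ∃ a b c, [a, b, c] ~ [x, y, z] ∧ a + m ≠ 0 ∧ m + b ≠ 0 ∧ b + c ≠ 0 := by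
  simp only [nodup_cons, mem_cons, not_mem_nil, or_false, not_or, nodup_nil] at hnd
  by_cases hxm : x + m = 0
  · exact ⟨y, z, x, perm_append_comm (l₁ := [y, z]) (l₂ := [x]), by grind, by grind, by grind⟩
  by_cases hym : y + m = 0
  · exact ⟨x, z, y, .cons _ (.swap _ _ _), hxm, by grind, by grind⟩
  by_cases hyz : y + z = 0
  · exact ⟨y, x, z, .swap _ _ _, hym, by grind, by grind⟩
  exact ⟨x, y, z, .refl _, hxm, by grind, hyz⟩

theorem exists_perm_nodup_partialSums_four {m x y z : G} (hnd : [m, x, y, z].Nodup)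
    (h0 : 0 ∉ [m, x, y, z]) (hsum : m + x + y + z ≠ 0) (hsum_mem : m + x + y + z ∉ [x, y, z]) :
    ∃ t, t ~ [m, x, y, z] ∧ t.partialSums.Nodup := by
  obtain ⟨a, b, c, hperm, ham, hmb, hbc⟩ := exists_perm_adjacent_add_ne_zero hnd
  have hperm' : [a, m, b, c] ~ [m, x, y, z] := (Perm.swap m a [b, c]).trans (hperm.cons m)
  have hS : a + m + b + c = m + x + y + z := by simpa [add_assoc] using hperm'.sum_eq
  have hends : ∀ u ∈ [a, b, c], u ≠ 0 ∧ u ≠ a + m + b + c := fun u hu =>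
    have hu := hperm.subset hu
    ⟨ne_of_mem_of_not_mem (mem_cons_of_mem m hu) h0, hS ▸ ne_of_mem_of_not_mem hu hsum_mem⟩
  simp only [forall_mem_cons, not_mem_nil, IsEmpty.forall_iff, implies_true, and_true] at hends
  obtain ⟨⟨ha0, haS⟩, ⟨hb0, -⟩, ⟨hc0, hcS⟩⟩ := hends
  exact ⟨[a, m, b, c], hperm', nodup_partialSums_four ha0 (ne_of_mem_of_not_mem mem_cons_self h0)
    hb0 hc0 ham hmb hbc (hS ▸ hsum) haS hcS⟩

theorem exists_perm_nodup_partialSums_of_length_eq_four [DecidableEq G] {u : List G}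
    (hu : u.Nodup) (h0 : 0 ∉ u) (hlen : u.length = 4) (hsum : u.sum ≠ 0) :
    ∃ t, t ~ u ∧ t.partialSums.Nodup := by
  obtain ⟨m, v, huv, hv⟩ := exists_perm_cons_notMem hu (ne_nil_of_length_pos (by omega)) u.sum
  obtain ⟨x, y, z, rfl⟩ := length_eq_three.mp (by simpa [hlen] using huv.length_eq.symm)
  have hS : u.sum = m + x + y + z := by simp [huv.sum_eq, add_assoc]
  obtain ⟨t, htu, ht⟩ := exists_perm_nodup_partialSums_four (huv.nodup_iff.mp hu)
    (fun h => h0 (huv.symm.subset h)) (hS ▸ hsum) (hS ▸ hv)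
  exact ⟨t, htu.trans huv.symm, ht⟩

theorem exists_perm_nodup_partialSums [DecidableEq G] {v : List G} (hv : v.Nodup) (h0 : 0 ∉ v)
    (hlen : v.length ≤ 4) (hsum : v ≠ [] → v.sum ≠ 0) : ∃ t, t ~ v ∧ t.partialSums.Nodup := by
  match v, hv, h0, hlen, hsum with
  | [], _, _, _, _ => exact ⟨[], .refl _, by simp⟩
  | [x], _, h0, _, _ => exact ⟨[x], .refl _, by simpa [partialSums_cons, eq_comm] using h0⟩
  | [x, y], hv, h0, _, hsum =>
    refine ⟨[x, y], .refl _, ?_⟩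
    have hxy := hsum (cons_ne_nil _ _)
    simp only [nodup_cons, mem_cons, not_or, sum_cons, sum_nil, add_zero] at hv h0 hxy ⊢
    simp [partialSums_cons]
    grind
  | [x, y, z], hv, h0, _, hsum =>
    exact exists_perm_nodup_partialSums_three hv h0
      (by simpa [add_assoc] using hsum (cons_ne_nil _ _))
  | [w, x, y, z], hv, h0, _, hsum =>
    exact exists_perm_nodup_partialSums_of_length_eq_four hv h0 rfl (hsum (cons_ne_nil _ _))
  | _ :: _ :: _ :: _ :: _ :: _, _, _, hlen, _ =>
    simp only [length_cons] at hlen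
    omega

/-- If the tail `b :: w` sums to zero, swapping `a` and `b` leaves the tail sum `a - b ≠ 0`. -/
theorem exists_perm_cons_sum_ne_zero {u : List G} (hu : u.Nodup) (hne : u ≠ []) :
    ∃ p v, u ~ p :: v ∧ (v ≠ [] → v.sum ≠ 0) := by
  match u, hu, hne with
  | [a], _, _ => exact ⟨a, [], .refl _, absurd rfl⟩
  | a :: b :: w, hu, _ =>
    by_cases h : (b :: w).sum = 0
    · refine ⟨b, a :: w, .swap _ _ _, fun _ => ?_⟩
      simp only [sum_cons] at h ⊢
      simp only [nodup_cons, mem_cons, not_or] at hu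
      grind
    · exact ⟨a, b :: w, .refl _, fun _ => h⟩

end AddCommGroup

theorem sequenceable_of_card_le_five_general
    (n : ℕ) (A : Finset (ZMod n)) (hA : A.Nonempty)
    (h0 : (0 : ZMod n) ∉ A) (hcard : A.card ≤ 5) :
    ∃ l : List (ZMod n), l.Nodup ∧ l.toFinset = A ∧ distinctPartialSums l := by
  obtain ⟨p, v, hperm, hv⟩ :=
    exists_perm_cons_sum_ne_zero A.nodup_toList (by simpa using hA.ne_empty)
  have hlen : v.length ≤ 4 := by
    have := hperm.length_eq
    simp only [Finset.length_toList, length_cons] at this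
    omega
  have h0v : 0 ∉ v := fun h => h0 (by simpa using hperm.symm.subset (mem_cons_of_mem p h))
  obtain ⟨t, htv, ht⟩ :=
    exists_perm_nodup_partialSums (hperm.nodup_iff.mp A.nodup_toList).of_cons h0v hlen hv
  have hl : p :: t ~ A.toList := (htv.cons p).trans hperm.symm
  exact ⟨p :: t, hl.nodup_iff.mpr A.nodup_toList,
    by rw [toFinset_eq_of_perm _ _ hl, Finset.toList_toFinset], distinctPartialSums_cons_iff.mpr ht⟩

/-- Every nonempty subset of `ZMod n \ {0}` with at most 5 elements can be
ordered so that all partial sums are pairwise distinct. -/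
theorem sequenceable_of_card_le_five
    (n : ℕ) (hn : 2 ≤ n) (A : Finset (ZMod n)) (hA : A.Nonempty)
    (h0 : (0 : ZMod n) ∉ A) (hcard : A.card ≤ 5) :
    ∃ l : List (ZMod n), l.Nodup ∧ l.toFinset = A ∧ distinctPartialSums l :=
  sequenceable_of_card_le_five_general n A hA h0 hcard
end

section
/- Let n ≥ 3 be an integer, let ℓ be an integer with 1 ≤ ℓ ≤ n − 2, and let t ∈ Z_n. Then the number of ℓ-element subsets A of Z_n \ {0} whose elements sum to t is at most (2/n) · C(n−1, ℓ); equivalently, n times the number of such subsets is at most 2 · C(n−1, ℓ). -/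
open Finset

private lemma filter_card_key (n : ℕ) [NeZero n] (ℓ : ℕ) (hl : 1 ≤ ℓ) (t : ZMod n) :
    ℓ * (Finset.univ.filter (fun A : Finset (ZMod n) =>
        (0 : ZMod n) ∉ A ∧ A.card = ℓ ∧ (∑ a ∈ A, a) = t)).card
      ≤ Nat.choose (n - 1) (ℓ - 1) := by
  classical
  set F := Finset.univ.filter (fun A : Finset (ZMod n) =>
        (0 : ZMod n) ∉ A ∧ A.card = ℓ ∧ (∑ a ∈ A, a) = t) with hF
  set T := (Finset.univ.erase (0 : ZMod n)).powersetCard (ℓ - 1) with hT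
  have hTcard : T.card = Nat.choose (n - 1) (ℓ - 1) := by
    rw [hT, Finset.card_powersetCard, Finset.card_erase_of_mem (Finset.mem_univ _),
      Finset.card_univ, ZMod.card]
  have hcount : (F.sigma fun A => A).card = ℓ * F.card := by
    rw [Finset.card_sigma]
    rw [Finset.sum_congr rfl (fun A hA => ((Finset.mem_filter.mp hA).2.2.1 : A.card = ℓ))]
    simp [mul_comm]
  have key : ∀ p ∈ F.sigma (fun A => A),
      ((0:ZMod n) ∉ p.1 ∧ p.1.card = ℓ ∧ (∑ a ∈ p.1, a) = t) ∧ p.2 ∈ p.1 := by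
    intro p hp
    rw [Finset.mem_sigma] at hp
    exact ⟨(Finset.mem_filter.mp hp.1).2, hp.2⟩
  have hmaps : ∀ p ∈ F.sigma (fun A => A), p.1.erase p.2 ∈ T := by
    intro p hp
    obtain ⟨⟨h0, hc, hs⟩, hmem⟩ := key p hp
    rw [hT, Finset.mem_powersetCard]
    constructor
    · intro x hx
      rw [Finset.mem_erase] at hx ⊢
      refine ⟨fun h => h0 (h ▸ hx.2), Finset.mem_univ _⟩
    · rw [Finset.card_erase_of_mem hmem, hc]
  have hsumerase : ∀ p ∈ F.sigma (fun A => A),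
      (∑ x ∈ p.1.erase p.2, x) = t - p.2 := by
    intro p hp
    obtain ⟨⟨h0, hc, hs⟩, hmem⟩ := key p hp
    have h2 := Finset.sum_erase_add p.1 (fun x => x) hmem
    rw [hs] at h2
    exact eq_sub_of_add_eq h2
  have hinj : Set.InjOn (fun p : (_ : Finset (ZMod n)) × ZMod n => p.1.erase p.2)
      (F.sigma fun A => A) := by
    intro p hp q hq heq
    simp only at heq
    have hp' := hp; have hq' := hq
    rw [Finset.mem_coe] at hp' hq'
    obtain ⟨⟨_, _, _⟩, hmemp⟩ := key p hp'
    obtain ⟨⟨_, _, _⟩, hmemq⟩ := key q hq'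
    have hs1 := hsumerase p hp'
    have hs2 := hsumerase q hq'
    rw [heq, hs2] at hs1
    have h2 : p.2 = q.2 := by
      have h3 : t - (t - p.2) = t - (t - q.2) := by rw [hs1]
      simpa [sub_sub_cancel] using h3
    have h1 : p.1 = q.1 := by
      have := Finset.insert_erase hmemp
      rw [heq, h2, Finset.insert_erase hmemq] at this
      exact this.symm
    exact Sigma.ext h1 (heq_of_eq h2)
  calc ℓ * F.card = (F.sigma fun A => A).card := hcount.symm
    _ ≤ T.card := Finset.card_le_card_of_injOn _ hmaps hinj
    _ = _ := hTcard

private lemma filter_card_key2 (n : ℕ) [NeZero n] (ℓ : ℕ) (hl : 1 ≤ ℓ) (t : ZMod n) :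
    (n - ℓ) * (Finset.univ.filter (fun A : Finset (ZMod n) =>
        (0 : ZMod n) ∉ A ∧ A.card = ℓ ∧ (∑ a ∈ A, a) = t)).card
      ≤ Nat.choose (n - 1) ℓ := by
  have h1 := filter_card_key n ℓ hl t
  have hid : Nat.choose (n - 1) ℓ * ℓ = Nat.choose (n - 1) (ℓ - 1) * (n - ℓ) := by
    have h := Nat.choose_succ_right_eq (n - 1) (ℓ - 1)
    rw [Nat.sub_add_cancel hl] at h
    rw [h]
    congr 1
    omega
  have h2 : ℓ * ((n - ℓ) * (Finset.univ.filter (fun A : Finset (ZMod n) =>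
        (0 : ZMod n) ∉ A ∧ A.card = ℓ ∧ (∑ a ∈ A, a) = t)).card)
      ≤ ℓ * Nat.choose (n - 1) ℓ := by
    calc ℓ * ((n - ℓ) * _) = (n - ℓ) * (ℓ * _) := by ring
      _ ≤ (n - ℓ) * Nat.choose (n - 1) (ℓ - 1) := Nat.mul_le_mul_left _ h1
      _ = ℓ * Nat.choose (n - 1) ℓ := by rw [mul_comm, hid.symm]; ring
  exact Nat.le_of_mul_le_mul_left h2 hl

private lemma filter_card_compl (n : ℕ) [NeZero n] (ℓ : ℕ) (hl : ℓ ≤ n - 1) (t : ZMod n) :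
    (Finset.univ.filter (fun A : Finset (ZMod n) =>
        (0 : ZMod n) ∉ A ∧ A.card = ℓ ∧ (∑ a ∈ A, a) = t)).card
    = (Finset.univ.filter (fun A : Finset (ZMod n) =>
        (0 : ZMod n) ∉ A ∧ A.card = n - 1 - ℓ ∧
        (∑ a ∈ A, a) = (∑ x ∈ Finset.univ.erase (0 : ZMod n), x) - t)).card := by
  classical
  set E := Finset.univ.erase (0 : ZMod n) with hE
  have hEcard : E.card = n - 1 := by
    rw [hE, Finset.card_erase_of_mem (Finset.mem_univ _), Finset.card_univ, ZMod.card]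
  have hsub : ∀ A : Finset (ZMod n), (0 : ZMod n) ∉ A → A ⊆ E := by
    intro A h0 x hx
    exact Finset.mem_erase.mpr ⟨fun h => h0 (h ▸ hx), Finset.mem_univ _⟩
  refine Finset.card_bij' (fun A _ => E \ A) (fun B _ => E \ B) ?_ ?_ ?_ ?_
  · intro A hA
    obtain ⟨-, h0, hc, hs⟩ := Finset.mem_filter.mp hA
    have hAE := hsub A h0
    refine Finset.mem_filter.mpr ⟨Finset.mem_univ _, ?_, ?_, ?_⟩
    · intro h
      exact (Finset.mem_erase.mp (Finset.mem_sdiff.mp h).1).1 rfl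
    · rw [Finset.card_sdiff_of_subset hAE, hEcard, hc]
    · have := Finset.sum_sdiff (f := fun x => x) hAE
      rw [hs] at this
      exact eq_sub_of_add_eq this
  · intro B hB
    obtain ⟨-, h0, hc, hs⟩ := Finset.mem_filter.mp hB
    have hBE := hsub B h0
    refine Finset.mem_filter.mpr ⟨Finset.mem_univ _, ?_, ?_, ?_⟩
    · intro h
      exact (Finset.mem_erase.mp (Finset.mem_sdiff.mp h).1).1 rfl
    · rw [Finset.card_sdiff_of_subset hBE, hEcard, hc]
      omega
    · have := Finset.sum_sdiff (f := fun x => x) hBE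
      rw [hs] at this
      have h2 := eq_sub_of_add_eq this
      rw [h2, sub_sub_cancel]
  · intro A hA
    obtain ⟨-, h0, -, -⟩ := Finset.mem_filter.mp hA
    exact Finset.sdiff_sdiff_eq_self (hsub A h0)
  · intro B hB
    obtain ⟨-, h0, -, -⟩ := Finset.mem_filter.mp hB
    exact Finset.sdiff_sdiff_eq_self (hsub B h0)


/-- For `1 ≤ ℓ ≤ n - 2`, the number of `ℓ`-element subsets of `ZMod n \ {0}`
whose elements sum to `t` is at most `(2/n) · C(n-1, ℓ)`, stated in the
multiplied-out form `n · #{such subsets} ≤ 2 · C(n-1, ℓ)`. -/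
theorem card_subsets_with_sum_le
    (n : ℕ) (hn : 3 ≤ n) (ℓ : ℕ) (hl1 : 1 ≤ ℓ) (hl2 : ℓ ≤ n - 2) (t : ZMod n) :
    n * {A : Finset (ZMod n) |
          (0 : ZMod n) ∉ A ∧ A.card = ℓ ∧ (∑ a ∈ A, a) = t}.ncard
      ≤ 2 * Nat.choose (n - 1) ℓ := by
  classical
  haveI : NeZero n := ⟨by omega⟩
  have hset : {A : Finset (ZMod n) |
          (0 : ZMod n) ∉ A ∧ A.card = ℓ ∧ (∑ a ∈ A, a) = t}
      = ↑(Finset.univ.filter (fun A : Finset (ZMod n) =>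
          (0 : ZMod n) ∉ A ∧ A.card = ℓ ∧ (∑ a ∈ A, a) = t)) := by
    ext A; simp
  rw [hset, Set.ncard_coe_finset]
  by_cases hcase : n ≤ 2 * (n - ℓ)
  · calc n * _ ≤ 2 * (n - ℓ) * _ := Nat.mul_le_mul_right _ hcase
      _ = 2 * ((n - ℓ) * _) := by ring
      _ ≤ 2 * Nat.choose (n - 1) ℓ :=
        Nat.mul_le_mul_left _ (filter_card_key2 n ℓ hl1 t)
  · have hcompl := filter_card_compl n ℓ (by omega) t
    rw [hcompl]
    have hk2 := filter_card_key2 n (n - 1 - ℓ) (by omega)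
      ((∑ x ∈ Finset.univ.erase (0 : ZMod n), x) - t)
    have hchoose : Nat.choose (n - 1) (n - 1 - ℓ) = Nat.choose (n - 1) ℓ := by
      exact Nat.choose_symm (by omega)
    rw [hchoose] at hk2
    have hn2 : n - (n - 1 - ℓ) = ℓ + 1 := by omega
    rw [hn2] at hk2
    calc n * _ ≤ 2 * (ℓ + 1) * _ := Nat.mul_le_mul_right _ (by omega)
      _ = 2 * ((ℓ + 1) * _) := by ring
      _ ≤ 2 * Nat.choose (n - 1) ℓ := Nat.mul_le_mul_left _ hk2
end

section
/- Let n ≥ 3 be an integer and let k be an integer with 1 ≤ k ≤ n − 1. Call a k-element subset A of Z_n \ {0} bad if no ordering of the elements of A has pairwise distinct partial sums. Then the number of bad k-subsets of Z_n \ {0} is at most (k(k−1)/n) · C(n−1, k); equivalently, n times the number of bad k-subsets is at most k(k−1) · C(n−1, k). -/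
/-!
Count orderings instead of sets: each bad `k`-set is the set of entries of `k!` injective tuples
of nonzero residues, and each of these has a block of `m` consecutive entries (`1 ≤ m ≤ k - 1`)
summing to `0`, namely the block between two equal partial sums. For a fixed block, the tuples
with zero block sum number at most `(n - 1)_k / (n - m)`: replacing the last entry of the block by
any of the `n - m` values other than `0` and the other block entries (swapping it with the
position already holding that value) is injective, because the old last entry is minus the sum
of the other block entries. A block of length `m` has `k - m` positions and
`(k - m) / (n - m) ≤ k / n`, so at most `k (k - 1) / n · (n - 1)_k = k (k - 1) / n · k! · C(n - 1, k)`
tuples fail.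
-/

open Finset
open scoped Nat

section

variable {ι α : Type*} [Fintype ι] [DecidableEq ι] [AddCommGroup α] [DecidableEq α]

theorem card_sub_mul_card_filter_sum_eq_zero_le (V : Finset α) {S : Finset ι} (hS : S.Nonempty) :
    (#V + 1 - #S) * #{f : ι ↪ V | ∑ t ∈ S, (f t : α) = 0} ≤
      (#V).descFactorial (Fintype.card ι) := by
  obtain ⟨j, hj⟩ := hS
  set H : Finset (ι ↪ V) := {f | ∑ t ∈ S, (f t : α) = 0}
  let free (f : ι ↪ V) : Finset V := ((S.erase j).image f)ᶜ
  let resample (p : Σ _ : ι ↪ V, V) : ι ↪ V := p.1.trans (Equiv.swap (p.1 j) p.2).toEmbedding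
  have card_free (f : ι ↪ V) : #(free f) = #V + 1 - #S := by
    have := card_pos.mpr ⟨j, hj⟩
    rw [card_compl, card_image_of_injective _ f.injective, card_erase_of_mem hj,
      Fintype.card_coe]
    omega
  have resample_eq_on {p} (hp : p ∈ H.sigma free) : ∀ t ∈ S.erase j, resample p t = p.1 t := by
    intro t ht
    refine Equiv.swap_apply_of_ne_of_ne (p.1.injective.ne (mem_erase.mp ht).1) fun h => ?_
    exact (mem_compl.mp (mem_sigma.mp hp).2) (mem_image.mpr ⟨t, ht, h⟩)
  have resample_determines {p} (hp : p ∈ H.sigma free) :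
      (p.1 j : α) = -∑ t ∈ S.erase j, (resample p t : α) := by
    rw [sum_congr rfl fun t ht => congrArg Subtype.val (resample_eq_on hp t ht),
      eq_neg_iff_add_eq_zero, add_sum_erase S (fun t => (p.1 t : α)) hj]
    exact (mem_filter.mp (mem_sigma.mp hp).1).2
  have resample_injOn : Set.InjOn resample (H.sigma free) := by
    rintro ⟨f, c⟩ hp ⟨f', c'⟩ hp' h
    have hc : c = c' := by
      simpa [resample] using DFunLike.congr_fun h j
    have hfj : f j = f' j := Subtype.ext <| by
      rw [resample_determines hp, resample_determines hp', h]
    subst hc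
    have hf : f = f' := by
      ext t
      simpa [resample, hfj] using DFunLike.congr_fun h t
    subst hf
    rfl
  calc (#V + 1 - #S) * #H = #(H.sigma free) := by
        rw [card_sigma, sum_congr rfl fun f _ => card_free f, sum_const, smul_eq_mul, mul_comm]
    _ ≤ #(univ : Finset (ι ↪ V)) :=
        card_le_card_of_injOn resample (fun _ _ => mem_coe.mpr (mem_univ _)) resample_injOn
    _ = (#V).descFactorial (Fintype.card ι) := by
        rw [card_univ, Fintype.card_embedding_eq, Fintype.card_coe]

end

/-- The `0`-indexed positions `i + 1, …, i + m`, between the `(i + 1)`-st and the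
`(i + m + 1)`-st partial sum. -/
def window (k i m : ℕ) : Finset (Fin k) := {t | i < (t : ℕ) ∧ (t : ℕ) ≤ i + m}

theorem card_window_le (k i m : ℕ) : #(window k i m) ≤ m := by
  calc #(window k i m) ≤ #(Ioc i (i + m)) :=
        card_le_card_of_injOn (fun t => (t : ℕ)) (fun t ht => by simpa [window] using ht)
          Fin.val_injective.injOn
    _ = m := by simp

theorem window_nonempty {k i m : ℕ} (hm : 1 ≤ m) (hk : i + m < k) : (window k i m).Nonempty :=
  ⟨⟨i + 1, by omega⟩, by simp only [window, mem_filter, mem_univ, true_and]; omega⟩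

theorem sum_filter_lt_eq_add_sum_window {M : Type*} [AddCommMonoid M] {k i j : ℕ} (hij : i ≤ j)
    (f : Fin k → M) :
    ∑ t : Fin k with t.val < j + 1, f t =
      ∑ t : Fin k with t.val < i + 1, f t + ∑ t ∈ window k i (j - i), f t := by
  simp only [window, sum_filter, ← sum_add_distrib]
  refine sum_congr rfl fun t _ => ?_
  split_ifs <;> first | (exfalso; omega) | simp

theorem exists_window_sum_eq_zero {n k : ℕ} {f : Fin k → ZMod n}
    (h : ¬ distinctPartialSums (List.ofFn f)) :
    ∃ m ∈ Ico 1 k, ∃ i ∈ range (k - m), ∑ t ∈ window k i m, f t = 0 := by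
  simp only [distinctPartialSums, List.length_ofFn, List.sum_take_ofFn, not_forall, not_not] at h
  obtain ⟨i, j, hij, hjk, hsum⟩ := h
  refine ⟨j - i, mem_Ico.mpr (by omega), i, mem_range.mpr (by omega), ?_⟩
  rwa [sum_filter_lt_eq_add_sum_window hij.le, left_eq_add] at hsum

section

variable {α : Type*} [AddCommGroup α] [DecidableEq α]

theorem card_mul_card_filter_exists_window_sum_eq_zero_le (V : Finset α) {k : ℕ}
    (hk : k ≤ #V + 1) :
    (#V + 1) * #{f : Fin k ↪ V | ∃ m ∈ Ico 1 k, ∃ i ∈ range (k - m),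
        ∑ t ∈ window k i m, (f t : α) = 0} ≤ k * (k - 1) * (#V).descFactorial k := by
  set N := #V + 1
  set D := (#V).descFactorial k
  let H (m i : ℕ) : Finset (Fin k ↪ V) := {f | ∑ t ∈ window k i m, (f t : α) = 0}
  have per_window : ∀ m ∈ Ico 1 k, ∀ i ∈ range (k - m), (N - m) * #(H m i) ≤ D := by
    intro m hm i hi
    have hS : (window k i m).Nonempty :=
      window_nonempty (mem_Ico.mp hm).1 (by have := mem_range.mp hi; omega)
    calc (N - m) * #(H m i) ≤ (N - #(window k i m)) * #(H m i) := by
          gcongr; exact card_window_le k i m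
      _ ≤ D := by simpa using card_sub_mul_card_filter_sum_eq_zero_le V hS
  -- `(k - m) / (N - m) ≤ k / N` since `k ≤ N`
  have per_length : ∀ m ∈ Ico 1 k, N * ∑ i ∈ range (k - m), #(H m i) ≤ k * D := by
    intro m hm
    have hmN : m < N := by have := (mem_Ico.mp hm).2; omega
    refine Nat.le_of_mul_le_mul_left ?_ (Nat.sub_pos_of_lt hmN)
    calc (N - m) * (N * ∑ i ∈ range (k - m), #(H m i))
        = N * ∑ i ∈ range (k - m), (N - m) * #(H m i) := by rw [mul_left_comm, mul_sum]
      _ ≤ N * ((k - m) * D) := by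
          gcongr
          simpa using sum_le_card_nsmul _ _ _ (per_window m hm)
      _ = (N * (k - m)) * D := by ring
      _ ≤ ((N - m) * k) * D := by
          refine Nat.mul_le_mul_right D ?_
          rw [Nat.mul_sub, Nat.sub_mul, mul_comm N k, mul_comm N m]
          exact Nat.sub_le_sub_left (Nat.mul_le_mul_left m hk) _
      _ = (N - m) * (k * D) := by ring
  calc N * #{f : Fin k ↪ V | ∃ m ∈ Ico 1 k, ∃ i ∈ range (k - m),
          ∑ t ∈ window k i m, (f t : α) = 0}
      ≤ N * ∑ m ∈ Ico 1 k, ∑ i ∈ range (k - m), #(H m i) := by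
        gcongr
        refine (card_le_card fun f hf => ?_).trans
          (card_biUnion_le.trans (sum_le_sum fun m _ => card_biUnion_le))
        simpa [H] using hf
    _ ≤ ∑ _m ∈ Ico 1 k, k * D := by rw [mul_sum]; exact sum_le_sum per_length
    _ = k * (k - 1) * D := by rw [sum_const, Nat.card_Ico, smul_eq_mul]; ring

end

section

variable {α : Type*} [DecidableEq α]

theorem factorial_le_card_filter_toFinset_eq {V A : Finset α} (hAV : A ⊆ V) {k : ℕ}
    (hA : #A = k) : k ! ≤ #{f : Fin k ↪ V | (List.ofFn fun t => (f t : α)).toFinset = A} := by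
  let incl : A ↪ V := ⟨fun x => ⟨x, hAV x.2⟩, fun x y h => Subtype.ext (Subtype.mk.inj h)⟩
  calc k ! = #(univ : Finset (Fin k ↪ A)) := by
        rw [card_univ, Fintype.card_embedding_eq, Fintype.card_coe, hA, Fintype.card_fin,
          Nat.descFactorial_self]
    _ ≤ _ := card_le_card_of_injOn (fun e => e.trans incl) (fun e _ => ?_) (fun e _ e' _ h => ?_)
  · have hnodup : (List.ofFn fun t => ((e.trans incl) t : α)).Nodup :=
      List.nodup_ofFn.mpr fun a b h => (e.trans incl).injective (Subtype.ext h)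
    simp only [coe_filter, mem_univ, true_and, Set.mem_ofPred_eq]
    refine eq_of_subset_of_card_le (fun x hx => ?_) ?_
    · obtain ⟨t, rfl⟩ := List.mem_ofFn.mp (List.mem_toFinset.mp hx)
      exact (e t).2
    · rw [List.toFinset_card_of_nodup hnodup, List.length_ofFn, hA]
  · ext t
    exact congrArg (fun g : Fin k ↪ V => (g t : α)) h

theorem factorial_mul_card_le_card_filter_toFinset_mem {V : Finset α} {k : ℕ}
    {𝒜 : Finset (Finset α)} (h𝒜 : ∀ A ∈ 𝒜, A ⊆ V ∧ #A = k) :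
    k ! * #𝒜 ≤ #{f : Fin k ↪ V | (List.ofFn fun t => (f t : α)).toFinset ∈ 𝒜} := by
  rw [← sum_card_fiberwise_eq_card_filter, mul_comm, ← smul_eq_mul, ← sum_const]
  exact sum_le_sum fun A hA => factorial_le_card_filter_toFinset_eq (h𝒜 A hA).1 (h𝒜 A hA).2

end

def badSubsets (n k : ℕ) : Set (Finset (ZMod n)) :=
  {A | (0 : ZMod n) ∉ A ∧ A.card = k ∧
    ¬ ∃ l : List (ZMod n), l.Nodup ∧ l.toFinset = A ∧ distinctPartialSums l}

theorem factorial_mul_ncard_badSubsets_le (n k : ℕ) [NeZero n] :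
    k ! * (badSubsets n k).ncard ≤ #{f : Fin k ↪ (univ.erase 0 : Finset (ZMod n)) |
      ∃ m ∈ Ico 1 k, ∃ i ∈ range (k - m), ∑ t ∈ window k i m, (f t : ZMod n) = 0} := by
  classical
  rw [Set.ncard_eq_toFinset_card _ (Set.toFinite _)]
  refine (factorial_mul_card_le_card_filter_toFinset_mem fun A hA => ?_).trans
    (card_le_card fun f hf => ?_)
  · simp only [badSubsets, Set.Finite.mem_toFinset, Set.mem_ofPred_eq] at hA
    exact ⟨fun x hx => mem_erase.mpr ⟨ne_of_mem_of_not_mem hx hA.1, mem_univ x⟩, hA.2.1⟩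
  · simp only [badSubsets, mem_filter, mem_univ, true_and, Set.Finite.mem_toFinset,
      Set.mem_ofPred_eq] at hf ⊢
    refine exists_window_sum_eq_zero fun h => hf.2.2 ⟨_, ?_, rfl, h⟩
    exact List.nodup_ofFn.mpr fun a b hab => f.injective (Subtype.ext hab)

theorem card_bad_subsets_le_general
    (n : ℕ) (k : ℕ) (hk1 : 1 ≤ k) (hk2 : k ≤ n - 1) :
    n * {A : Finset (ZMod n) |
          (0 : ZMod n) ∉ A ∧ A.card = k ∧
          ¬ ∃ l : List (ZMod n), l.Nodup ∧ l.toFinset = A ∧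
              distinctPartialSums l}.ncard
      ≤ k * (k - 1) * Nat.choose (n - 1) k := by
  have : NeZero n := ⟨by omega⟩
  have hV : #((univ : Finset (ZMod n)).erase 0) = n - 1 := by
    rw [card_erase_of_mem (mem_univ _), Finset.card_univ, ZMod.card]
  have hcount := card_mul_card_filter_exists_window_sum_eq_zero_le
    ((univ : Finset (ZMod n)).erase 0) (k := k) (by omega)
  rw [hV, Nat.sub_add_cancel (by omega), Nat.descFactorial_eq_factorial_mul_choose] at hcount
  refine Nat.le_of_mul_le_mul_left ?_ k.factorial_pos
  calc k ! * (n * (badSubsets n k).ncard) = n * (k ! * (badSubsets n k).ncard) := by ring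
    _ ≤ k * (k - 1) * (k ! * (n - 1).choose k) :=
        (Nat.mul_le_mul_left n (factorial_mul_ncard_badSubsets_le n k)).trans hcount
    _ = k ! * (k * (k - 1) * (n - 1).choose k) := by ring

/-- A `k`-subset of `ZMod n \ {0}` is *bad* if no ordering of its elements has
pairwise distinct partial sums.  The number of bad `k`-subsets is at most
`(k(k-1)/n) · C(n-1, k)`, stated in the multiplied-out form
`n · #{bad k-subsets} ≤ k(k-1) · C(n-1, k)`. -/
theorem card_bad_subsets_le
    (n : ℕ) (hn : 3 ≤ n) (k : ℕ) (hk1 : 1 ≤ k) (hk2 : k ≤ n - 1) :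
    n * {A : Finset (ZMod n) |
          (0 : ZMod n) ∉ A ∧ A.card = k ∧
          ¬ ∃ l : List (ZMod n), l.Nodup ∧ l.toFinset = A ∧
              distinctPartialSums l}.ncard
      ≤ k * (k - 1) * Nat.choose (n - 1) k :=
  card_bad_subsets_le_general n k hk1 hk2
end

section
/- Let n ≥ 2 be an integer and let A be a subset of Z_n \ {0} with |A| = k. Then there exists a subset B of A with |B| ≥ ⌊(k+1)/2⌋ such that the elements of B can be ordered so that all partial sums of the ordering are pairwise distinct in Z_n. -/
namespace distinctPartialSums

variable {n : ℕ}

theorem nil : distinctPartialSums ([] : List (ZMod n)) :=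
  fun _ j _ hj => absurd hj (Nat.not_lt_zero j)

theorem append_singleton {l : List (ZMod n)} {b : ZMod n} (hl : distinctPartialSums l)
    (hb : ∀ i < l.length, (l.take (i + 1)).sum ≠ l.sum + b) :
    distinctPartialSums (l ++ [b]) := by
  have take_prefix : ∀ i < l.length, ((l ++ [b]).take (i + 1)).sum = (l.take (i + 1)).sum :=
    fun i hi => by rw [List.take_append_of_le_length (by omega)]
  intro i j hij hj
  rw [List.length_append, List.length_singleton] at hj
  rcases Nat.lt_or_ge j l.length with hjl | hjl
  · rw [take_prefix i (hij.trans hjl), take_prefix j hjl]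
    exact hl i j hij hjl
  · obtain rfl : j = l.length := by omega
    rw [take_prefix i (by omega), List.take_of_length_le (l := l ++ [b]) (by simp),
      List.sum_append, List.sum_singleton]
    exact hb i (by omega)

end distinctPartialSums

section Greedy

variable {n : ℕ}

theorem exists_append_distinctPartialSums {A : Finset (ZMod n)} {l : List (ZMod n)}
    (hnd : l.Nodup) (hsub : l.toFinset ⊆ A) (hl : distinctPartialSums l)
    (hlen : 2 * l.length < A.card) :
    ∃ b ∈ A, b ∉ l ∧ distinctPartialSums (l ++ [b]) := by
  set forbidden : Finset (ZMod n) :=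
    (Finset.range l.length).image fun i => (l.take (i + 1)).sum - l.sum
  have forbidden_card : forbidden.card ≤ l.length :=
    Finset.card_image_le.trans (Finset.card_range _).le
  have unused_card : l.length < (A \ l.toFinset).card := by
    rw [Finset.card_sdiff_of_subset hsub, List.toFinset_card_of_nodup hnd]
    omega
  obtain ⟨b, hb⟩ : ((A \ l.toFinset) \ forbidden).Nonempty := by
    rw [← Finset.card_pos]
    have := Finset.le_card_sdiff forbidden (A \ l.toFinset)
    omega
  simp only [Finset.mem_sdiff, List.mem_toFinset] at hb
  obtain ⟨⟨hbA, hbl⟩, hbF⟩ := hb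
  refine ⟨b, hbA, hbl, hl.append_singleton fun i hi heq => hbF ?_⟩
  exact Finset.mem_image.2 ⟨i, Finset.mem_range.2 hi, by rw [heq, add_sub_cancel_left]⟩

theorem exists_nodup_distinctPartialSums (A : Finset (ZMod n)) :
    ∀ m, 2 * m ≤ A.card + 1 → ∃ l : List (ZMod n),
      l.Nodup ∧ l.length = m ∧ l.toFinset ⊆ A ∧ distinctPartialSums l
  | 0, _ => ⟨[], List.nodup_nil, rfl, by simp, distinctPartialSums.nil⟩
  | m + 1, hm => by
    obtain ⟨l, hnd, rfl, hsub, hl⟩ := exists_nodup_distinctPartialSums A m (by omega)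
    obtain ⟨b, hbA, hbl, hlb⟩ := exists_append_distinctPartialSums hnd hsub hl (by omega)
    refine ⟨l ++ [b], ?_, by simp, ?_, hlb⟩
    · exact hnd.append (List.nodup_singleton b) (by simpa using hbl)
    · simpa [List.toFinset_append] using Finset.insert_subset hbA hsub

end Greedy

theorem exists_large_orderable_subset_general
    (n : ℕ) (A : Finset (ZMod n))
    (k : ℕ) (hcard : A.card = k) :
    ∃ B ⊆ A, (k + 1) / 2 ≤ B.card ∧
      ∃ l : List (ZMod n), l.Nodup ∧ l.toFinset = B ∧ distinctPartialSums l := by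
  obtain ⟨l, hnd, hlen, hsub, hl⟩ :=
    exists_nodup_distinctPartialSums A ((k + 1) / 2) (by omega)
  refine ⟨l.toFinset, hsub, ?_, l, hnd, rfl, hl⟩
  rw [List.toFinset_card_of_nodup hnd, hlen]

/-- Every `k`-subset `A` of `ZMod n \ {0}` has a subset `B` with
`|B| ≥ ⌊(k+1)/2⌋` that can be ordered so that all partial sums are
pairwise distinct. -/
theorem exists_large_orderable_subset
    (n : ℕ) (hn : 2 ≤ n) (A : Finset (ZMod n)) (h0 : (0 : ZMod n) ∉ A)
    (k : ℕ) (hcard : A.card = k) :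
    ∃ B ⊆ A, (k + 1) / 2 ≤ B.card ∧
      ∃ l : List (ZMod n), l.Nodup ∧ l.toFinset = B ∧ distinctPartialSums l :=
  exists_large_orderable_subset_general n A k hcard
end

section
/- Let n ≥ 2 be an integer, let t ≥ 1, and let A be a subset of Z_n \ {0} with |A| = 2t. Then there exist at least 2^t subsets B of A with |B| = t such that the elements of B can be ordered so that all partial sums of the ordering are pairwise distinct in Z_n. -/
theorem card_le_factorial_of_forall_toFinset_eq {α : Type*} [DecidableEq α]
    {s : Finset (List α)} {B : Finset α} (hs : ∀ l ∈ s, l.Nodup ∧ l.toFinset = B) :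
    s.card ≤ B.card.factorial := by
  calc s.card ≤ B.toList.permutations.toFinset.card := by
        refine Finset.card_le_card fun l hl => ?_
        obtain ⟨hnd, hB⟩ := hs l hl
        rw [List.mem_toFinset, List.mem_permutations]
        exact List.perm_of_nodup_nodup_toFinset_eq hnd B.nodup_toList (by simp [hB])
    _ ≤ B.toList.permutations.length := List.toFinset_card_le _
    _ = B.card.factorial := by rw [List.length_permutations, Finset.length_toList]

section

variable {n : ℕ}

theorem distinctPartialSums_append_singleton_s7 (l : List (ZMod n)) (b : ZMod n) :
    distinctPartialSums (l ++ [b]) ↔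
      distinctPartialSums l ∧ ∀ i < l.length, (l.take (i + 1)).sum ≠ l.sum + b := by
  have take_eq : ∀ i < l.length, (l ++ [b]).take (i + 1) = l.take (i + 1) := fun i hi =>
    List.take_append_of_le_length (by omega)
  have take_last : (l ++ [b]).take (l.length + 1) = l ++ [b] :=
    List.take_of_length_le (by simp)
  constructor
  · intro h
    refine ⟨fun i j hij hj => ?_, fun i hi => ?_⟩
    · rw [← take_eq i (by omega), ← take_eq j hj]
      exact h i j hij (by simp; omega)
    · simpa [take_eq i hi, take_last] using h i l.length hi (by simp)
  · rintro ⟨hl, hb⟩ i j hij hj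
    rw [take_eq i (by simp at hj; omega)]
    obtain hj | rfl : j < l.length ∨ j = l.length := by simp at hj; omega
    · rw [take_eq j hj]
      exact hl i j hij hj
    · simpa [take_last] using hb i hij

def forbiddenNext (l : List (ZMod n)) : Finset (ZMod n) :=
  l.toFinset ∪ (Finset.range l.length).image fun i => (l.take (i + 1)).sum - l.sum

theorem card_forbiddenNext_le (l : List (ZMod n)) : (forbiddenNext l).card ≤ 2 * l.length :=
  calc (forbiddenNext l).card
      ≤ l.toFinset.card + ((Finset.range l.length).image
          fun i => (l.take (i + 1)).sum - l.sum).card := Finset.card_union_le _ _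
    _ ≤ l.length + l.length :=
        add_le_add l.toFinset_card_le (Finset.card_image_le.trans (by simp))
    _ = 2 * l.length := by ring

theorem card_sub_le_card_sdiff_forbiddenNext (A : Finset (ZMod n)) (l : List (ZMod n)) :
    A.card - 2 * l.length ≤ (A \ forbiddenNext l).card :=
  (Finset.le_card_sdiff _ _).trans' (by have := card_forbiddenNext_le l; omega)

theorem nodup_append_singleton_of_notMem_forbiddenNext {l : List (ZMod n)} {b : ZMod n}
    (hl : l.Nodup) (hb : b ∉ forbiddenNext l) : (l ++ [b]).Nodup := by
  simpa using hl.concat fun h => hb (Finset.mem_union_left _ (List.mem_toFinset.2 h))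

theorem distinctPartialSums_append_singleton_of_notMem_forbiddenNext {l : List (ZMod n)}
    {b : ZMod n} (hl : distinctPartialSums l) (hb : b ∉ forbiddenNext l) :
    distinctPartialSums (l ++ [b]) := by
  refine (distinctPartialSums_append_singleton_s7 l b).2 ⟨hl, fun i hi hsum => hb ?_⟩
  refine Finset.mem_union_right _ (Finset.mem_image.2 ⟨i, Finset.mem_range.2 hi, ?_⟩)
  rw [hsum, add_sub_cancel_left]

def greedyOrderings (A : Finset (ZMod n)) : ℕ → Finset (List (ZMod n))
  | 0 => {[]}
  | k + 1 => (greedyOrderings A k).biUnion fun l => (A \ forbiddenNext l).image (l ++ [·])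

theorem mem_greedyOrderings_succ {A : Finset (ZMod n)} {k : ℕ} {l' : List (ZMod n)} :
    l' ∈ greedyOrderings A (k + 1) ↔
      ∃ l ∈ greedyOrderings A k, ∃ b ∈ A, b ∉ forbiddenNext l ∧ l ++ [b] = l' := by
  simp [greedyOrderings, and_assoc]

theorem properties_of_mem_greedyOrderings {A : Finset (ZMod n)} {k : ℕ} {l : List (ZMod n)}
    (hl : l ∈ greedyOrderings A k) :
    l.length = k ∧ l.Nodup ∧ l.toFinset ⊆ A ∧ distinctPartialSums l := by
  induction k generalizing l with
  | zero =>
    obtain rfl : l = [] := by simpa [greedyOrderings] using hl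
    exact ⟨rfl, List.nodup_nil, by simp, fun i j _ hj => absurd hj (Nat.not_lt_zero j)⟩
  | succ k ih =>
    obtain ⟨l, hl', b, hbA, hb, rfl⟩ := mem_greedyOrderings_succ.1 hl
    obtain ⟨hlen, hnd, hsub, hdps⟩ := ih hl'
    refine ⟨by simp [hlen], nodup_append_singleton_of_notMem_forbiddenNext hnd hb, ?_,
      distinctPartialSums_append_singleton_of_notMem_forbiddenNext hdps hb⟩
    simpa [Finset.insert_subset_iff, hbA] using hsub

theorem card_greedyOrderings_succ (A : Finset (ZMod n)) (k : ℕ) :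
    (greedyOrderings A (k + 1)).card =
      ∑ l ∈ greedyOrderings A k, (A \ forbiddenNext l).card := by
  rw [greedyOrderings, Finset.card_biUnion]
  · exact Finset.sum_congr rfl fun l _ =>
      Finset.card_image_of_injective _ fun _ _ h => by simpa using h
  · intro l₁ _ l₂ _ hne
    simp only [Function.onFun, Finset.disjoint_left, Finset.mem_image]
    rintro _ ⟨b₁, _, rfl⟩ ⟨b₂, _, h⟩
    exact hne (List.append_inj_left' h rfl).symm

theorem prod_card_sub_le_card_greedyOrderings (A : Finset (ZMod n)) (k : ℕ) :
    ∏ i ∈ Finset.range k, (A.card - 2 * i) ≤ (greedyOrderings A k).card := by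
  induction k with
  | zero => simp [greedyOrderings]
  | succ k ih =>
    calc ∏ i ∈ Finset.range (k + 1), (A.card - 2 * i)
        = (∏ i ∈ Finset.range k, (A.card - 2 * i)) * (A.card - 2 * k) := Finset.prod_range_succ _ _
      _ ≤ (greedyOrderings A k).card * (A.card - 2 * k) := Nat.mul_le_mul_right _ ih
      _ = ∑ _l ∈ greedyOrderings A k, (A.card - 2 * k) := by rw [Finset.sum_const, smul_eq_mul]
      _ ≤ (greedyOrderings A (k + 1)).card := by
        rw [card_greedyOrderings_succ]
        refine Finset.sum_le_sum fun l hl => ?_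
        rw [← (properties_of_mem_greedyOrderings hl).1]
        exact card_sub_le_card_sdiff_forbiddenNext A l

theorem prod_range_two_mul_sub (t : ℕ) :
    ∏ i ∈ Finset.range t, (2 * t - 2 * i) = 2 ^ t * t.factorial := by
  simp_rw [← Nat.mul_sub, Finset.prod_mul_distrib, Finset.prod_const, Finset.card_range,
    ← Nat.descFactorial_eq_prod_range, Nat.descFactorial_self]

theorem two_pow_le_card_image_toFinset_greedyOrderings {A : Finset (ZMod n)} {t : ℕ}
    (hcard : A.card = 2 * t) :
    2 ^ t ≤ ((greedyOrderings A t).image List.toFinset).card := by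
  have card_orderings : 2 ^ t * t.factorial ≤ (greedyOrderings A t).card := by
    rw [← prod_range_two_mul_sub, ← hcard]
    exact prod_card_sub_le_card_greedyOrderings A t
  have card_fiber : ∀ B ∈ (greedyOrderings A t).image List.toFinset,
      ((greedyOrderings A t).filter (·.toFinset = B)).card ≤ t.factorial := by
    intro B hB
    obtain ⟨l, hl, rfl⟩ := Finset.mem_image.1 hB
    obtain ⟨hlen, hnd, -, -⟩ := properties_of_mem_greedyOrderings hl
    calc _ ≤ l.toFinset.card.factorial := card_le_factorial_of_forall_toFinset_eq fun l' hl' =>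
          ⟨(properties_of_mem_greedyOrderings (Finset.mem_filter.1 hl').1).2.1,
            (Finset.mem_filter.1 hl').2⟩
      _ = t.factorial := by rw [List.toFinset_card_of_nodup hnd, hlen]
  refine Nat.le_of_mul_le_mul_right ?_ t.factorial_pos
  exact (card_orderings.trans (Finset.card_le_mul_card_image _ _ card_fiber)).trans_eq
    (mul_comm _ _)

end

theorem card_orderable_half_subsets_ge_general
    (n : ℕ) (t : ℕ) (A : Finset (ZMod n))
    (hcard : A.card = 2 * t) :
    2 ^ t ≤ {B : Finset (ZMod n) | B ⊆ A ∧ B.card = t ∧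
      ∃ l : List (ZMod n), l.Nodup ∧ l.toFinset = B ∧
        distinctPartialSums l}.ncard := by
  refine (two_pow_le_card_image_toFinset_greedyOrderings hcard).trans ?_
  rw [← Set.ncard_coe_finset]
  refine Set.ncard_le_ncard (fun B hB => ?_)
    (A.powerset.finite_toSet.subset fun B hB => Finset.mem_powerset.2 hB.1)
  obtain ⟨l, hl, rfl⟩ := Finset.mem_image.1 hB
  obtain ⟨hlen, hnd, hsub, hdps⟩ := properties_of_mem_greedyOrderings hl
  exact ⟨hsub, by rw [List.toFinset_card_of_nodup hnd, hlen], l, hnd, rfl, hdps⟩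

/-- If `A ⊆ ZMod n \ {0}` has `2t` elements, then there are at least `2^t`
subsets `B ⊆ A` with `|B| = t` that can be ordered so that all partial sums
are pairwise distinct. -/
theorem card_orderable_half_subsets_ge
    (n : ℕ) (hn : 2 ≤ n) (t : ℕ) (ht : 1 ≤ t) (A : Finset (ZMod n))
    (h0 : (0 : ZMod n) ∉ A) (hcard : A.card = 2 * t) :
    2 ^ t ≤ {B : Finset (ZMod n) | B ⊆ A ∧ B.card = t ∧
      ∃ l : List (ZMod n), l.Nodup ∧ l.toFinset = B ∧
        distinctPartialSums l}.ncard :=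
  card_orderable_half_subsets_ge_general n t A hcard
end

section
/- Let p be a prime and let k be an integer with 1 ≤ k ≤ p − 1. Then for any α, β in F_p, the number of k-element subsets of F_p whose elements sum to α equals the number of k-element subsets of F_p whose elements sum to β; that is, N_k(α) = N_k(β). -/
/-- `N_k(α)`: the number of `k`-element subsets of `F_p` whose elements
sum to `α`. -/
noncomputable def Nsub (p k : ℕ) (α : ZMod p) : ℕ :=
  {A : Finset (ZMod p) | A.card = k ∧ (∑ a ∈ A, a) = α}.ncard

/-- For a prime `p`, `1 ≤ k ≤ p - 1`, and any `α, β ∈ F_p`, we have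
`N_k(α) = N_k(β)`. -/
theorem Nsub_eq
    (p : ℕ) (hp : p.Prime) (k : ℕ) (hk1 : 1 ≤ k) (hk2 : k ≤ p - 1)
    (α β : ZMod p) :
    Nsub p k α = Nsub p k β := by
  haveI := Fact.mk hp
  have hp1 : 1 < p := hp.one_lt
  have hk0 : (k : ZMod p) ≠ 0 := by
    rw [Ne, ZMod.natCast_eq_zero_iff]
    intro h
    have := Nat.le_of_dvd (by omega) h
    omega
  set c : ZMod p := (β - α) * (k : ZMod p)⁻¹ with hc
  have hkc : (k : ZMod p) * c = β - α := by
    rw [hc, mul_comm, mul_assoc, inv_mul_cancel₀ hk0, mul_one]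
  have hinj : Function.Injective (fun x : ZMod p => x + c) := add_left_injective c
  have hsum : ∀ A : Finset (ZMod p), A.card = k →
      (∑ a ∈ A.image (· + c), a) = (∑ a ∈ A, a) + (k : ZMod p) * c := by
    intro A hA
    rw [Finset.sum_image (fun x _ y _ h => hinj h), Finset.sum_add_distrib,
      Finset.sum_const, hA, nsmul_eq_mul]
  have himg : {A : Finset (ZMod p) | A.card = k ∧ (∑ a ∈ A, a) = β} =
      (fun A : Finset (ZMod p) => A.image (· + c)) ''
        {A : Finset (ZMod p) | A.card = k ∧ (∑ a ∈ A, a) = α} := by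
    ext B
    constructor
    · rintro ⟨hcard, hsumB⟩
      refine ⟨B.image (· + (-c)), ⟨?_, ?_⟩, ?_⟩
      · rw [Finset.card_image_of_injective _ (add_left_injective _), hcard]
      · have h2 : (∑ a ∈ B.image (· + (-c)), a) = (∑ a ∈ B, a) + (k : ZMod p) * (-c) := by
          rw [Finset.sum_image (fun x _ y _ h => add_left_injective _ h),
            Finset.sum_add_distrib, Finset.sum_const, hcard, nsmul_eq_mul]
        rw [h2, hsumB, mul_neg, hkc]
        ring
      · simp only [Finset.image_image]
        have : ((· + c) ∘ (· + (-c))) = id := by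
          funext x; simp
        rw [this, Finset.image_id]
    · rintro ⟨A, ⟨hcard, hsumA⟩, rfl⟩
      refine ⟨?_, ?_⟩
      · rw [Finset.card_image_of_injective _ hinj, hcard]
      · rw [hsum A hcard, hsumA, hkc]; ring
  unfold Nsub
  rw [himg, Set.ncard_image_of_injective _ (Finset.image_injective hinj)]
end

section
/- Let p be a prime and let k be an integer with 1 ≤ k ≤ p − 1. Then for every α ∈ F_p, the number N_k(α) of k-element subsets of F_p whose elements sum to α equals C(p, k)/p; equivalently, p · N_k(α) = C(p, k). -/
open Finset

namespace Finset

variable {G : Type*} [AddCommGroup G]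

theorem sum_map_addRight (s : Finset G) (c : G) :
    ∑ x ∈ s.map (Equiv.addRight c).toEmbedding, x = ∑ x ∈ s, x + #s • c := by
  simp [sum_add_distrib]

variable [Fintype G] [DecidableEq G]

def subsetsCardSum (k : ℕ) (α : G) : Finset (Finset G) :=
  {s | #s = k ∧ ∑ x ∈ s, x = α}

theorem card_subsetsCardSum_add_nsmul (k : ℕ) (α c : G) :
    #(subsetsCardSum k (α + k • c)) = #(subsetsCardSum k α) := by
  symm
  refine card_equiv (Equiv.addRight c).finsetCongr fun s => ?_
  simp only [subsetsCardSum, mem_filter, mem_univ, true_and, Equiv.finsetCongr_apply, card_map,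
    sum_map_addRight]
  exact and_congr_right fun hs => by rw [hs, add_left_inj]

theorem card_subsetsCardSum_eq_of_coprime {k : ℕ} (hk : (Nat.card G).Coprime k) (α β : G) :
    #(subsetsCardSum k α) = #(subsetsCardSum k β) := by
  obtain ⟨c, hc : k • c = β - α⟩ := hk.nsmul_right_bijective.surjective (β - α)
  rw [← card_subsetsCardSum_add_nsmul k α c, hc, add_sub_cancel]

theorem sum_card_subsetsCardSum (k : ℕ) :
    ∑ α : G, #(subsetsCardSum k α) = (Nat.card G).choose k := by
  simp only [subsetsCardSum, ← filter_filter]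
  rw [← card_eq_sum_card_fiberwise fun s _ => mem_univ (∑ x ∈ s, x), ← powerset_univ,
    ← powersetCard_eq_filter, card_powersetCard, card_univ, Nat.card_eq_fintype_card]

theorem card_mul_card_subsetsCardSum_of_coprime {k : ℕ} (hk : (Nat.card G).Coprime k) (α : G) :
    Nat.card G * #(subsetsCardSum k α) = (Nat.card G).choose k := by
  rw [← sum_card_subsetsCardSum, Nat.card_eq_fintype_card, ← card_univ, ← smul_eq_mul,
    ← sum_const]
  exact sum_congr rfl fun β _ => card_subsetsCardSum_eq_of_coprime hk α β

end Finset

theorem Nsub_eq_card_subsetsCardSum (p k : ℕ) [NeZero p] (α : ZMod p) :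
    Nsub p k α = #(subsetsCardSum k α) := by
  rw [Nsub, subsetsCardSum, ← Set.ncard_coe_finset, coe_filter]
  simp

/-- For a prime `p`, `1 ≤ k ≤ p - 1`, and any `α ∈ F_p`, we have
`N_k(α) = C(p, k) / p`, stated in the multiplied-out form
`p · N_k(α) = C(p, k)`. -/
theorem p_mul_Nsub_eq_choose
    (p : ℕ) (hp : p.Prime) (k : ℕ) (hk1 : 1 ≤ k) (hk2 : k ≤ p - 1)
    (α : ZMod p) :
    p * Nsub p k α = Nat.choose p k := by
  have : NeZero p := ⟨hp.ne_zero⟩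
  have hcop : (Nat.card (ZMod p)).Coprime k := by
    rw [Nat.card_zmod, hp.coprime_iff_not_dvd]
    exact Nat.not_dvd_of_pos_of_lt hk1 (by omega)
  simpa [Nsub_eq_card_subsetsCardSum, Nat.card_zmod] using
    card_mul_card_subsetsCardSum_of_coprime hcop α
end

section
/- Let p be a prime, let k be an integer with 1 ≤ k ≤ p − 1, and let α be a nonzero element of F_p. If k is even, then N_k^*(0) = N_k^*(α) + 1; if k is odd, then N_k^*(0) = N_k^*(α) − 1. -/
/-!
Let `T_k(α)` count all `k`-subsets of `F_p` with sum `α`. Sorting them by whether they contain `0`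
gives `T_{k+1}(α) = N*_{k+1}(α) + N*_k(α)`. For `0 < k < p`, translating a subset by `t` shifts
its sum by `k t`, so `T_k` does not depend on `α`. Hence `D_k = N*_k(0) - N*_k(α)` satisfies
`D_{k+1} = -D_k`, and `D_0 = 1` because the empty set is the only `0`-subset.
-/

/-- `N_k^*(α)`: the number of `k`-element subsets of `F_p \ {0}` whose
elements sum to `α`. -/
noncomputable def Nstar (p k : ℕ) (α : ZMod p) : ℕ :=
  {A : Finset (ZMod p) | (0 : ZMod p) ∉ A ∧ A.card = k ∧ (∑ a ∈ A, a) = α}.ncard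

section SubsetSum

variable {M : Type*}

noncomputable def subsetSumCount [AddCommMonoid M] (k : ℕ) (α : M) : ℕ :=
  {A : Finset M | A.card = k ∧ ∑ a ∈ A, a = α}.ncard

noncomputable def nonzeroSubsetSumCount [AddCommMonoid M] (k : ℕ) (α : M) : ℕ :=
  {A : Finset M | (0 : M) ∉ A ∧ A.card = k ∧ ∑ a ∈ A, a = α}.ncard

theorem nonzeroSubsetSumCount_zero_zero [AddCommMonoid M] :
    nonzeroSubsetSumCount 0 (0 : M) = 1 := by
  rw [nonzeroSubsetSumCount, Set.ncard_eq_one]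
  refine ⟨∅, Set.ext fun A => ⟨fun hA => Finset.card_eq_zero.1 hA.2.1, ?_⟩⟩
  rintro rfl
  simp

theorem nonzeroSubsetSumCount_zero_of_ne_zero [AddCommMonoid M] {α : M} (hα : α ≠ 0) :
    nonzeroSubsetSumCount 0 α = 0 := by
  have hempty : {A : Finset M | (0 : M) ∉ A ∧ A.card = 0 ∧ ∑ a ∈ A, a = α} = ∅ := by
    refine Set.eq_empty_of_forall_notMem fun A ⟨_, hcard, hsum⟩ => hα ?_
    rw [← hsum, Finset.card_eq_zero.1 hcard, Finset.sum_empty]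
  rw [nonzeroSubsetSumCount, hempty, Set.ncard_empty]

theorem subsetSumCount_add_nsmul [AddCommGroup M] (k : ℕ) (α t : M) :
    subsetSumCount k (α + k • t) = subsetSumCount k α := by
  let e : Finset M ≃ Finset M := (Equiv.addRight t).finsetCongr
  have hset : {A : Finset M | A.card = k ∧ ∑ a ∈ A, a = α + k • t} =
      e '' {A : Finset M | A.card = k ∧ ∑ a ∈ A, a = α} := by
    rw [Equiv.image_eq_preimage_symm]
    ext B
    simp only [Set.mem_ofPred_eq, Set.mem_preimage, e, Equiv.finsetCongr_symm,
      Equiv.finsetCongr_apply, Finset.card_map, Finset.sum_map]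
    simp only [Equiv.addRight_symm, Function.Embedding.coeFn_mk, Equiv.coe_addRight,
      ← sub_eq_add_neg, Finset.sum_sub_distrib, Finset.sum_const, sub_eq_iff_eq_add]
    exact and_congr_right fun hB => by rw [hB]
  rw [subsetSumCount, hset, Set.ncard_image_of_injective _ e.injective, subsetSumCount]

theorem subsetSumCount_eq_of_natCast_ne_zero {F : Type*} [Field F] {k : ℕ} (hk : (k : F) ≠ 0)
    (α β : F) : subsetSumCount k α = subsetSumCount k β := by
  have hβ : α + k • ((β - α) / k) = β := by
    rw [nsmul_eq_mul, mul_div_cancel₀ _ hk, add_sub_cancel]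
  rw [← hβ, subsetSumCount_add_nsmul]

theorem subsetSumCount_succ [AddCommMonoid M] [DecidableEq M] [Finite M] (k : ℕ) (α : M) :
    subsetSumCount (k + 1) α = nonzeroSubsetSumCount (k + 1) α + nonzeroSubsetSumCount k α := by
  have hsplit : {A : Finset M | A.card = k + 1 ∧ ∑ a ∈ A, a = α} =
      {A | (0 : M) ∉ A ∧ A.card = k + 1 ∧ ∑ a ∈ A, a = α} ∪
        {A | (0 : M) ∈ A ∧ A.card = k + 1 ∧ ∑ a ∈ A, a = α} := by
    ext A
    simp only [Set.mem_ofPred_eq, Set.mem_union]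
    tauto
  have hdisj : Disjoint {A : Finset M | (0 : M) ∉ A ∧ A.card = k + 1 ∧ ∑ a ∈ A, a = α}
      {A | (0 : M) ∈ A ∧ A.card = k + 1 ∧ ∑ a ∈ A, a = α} :=
    Set.disjoint_left.2 fun _ h₀ h₁ => h₀.1 h₁.1
  have hzero : {A : Finset M | (0 : M) ∈ A ∧ A.card = k + 1 ∧ ∑ a ∈ A, a = α}.ncard =
      nonzeroSubsetSumCount k α := by
    refine Set.ncard_congr (fun A _ => A.erase (0 : M)) ?_ ?_ ?_
    · rintro A ⟨h0, hcard, hsum⟩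
      refine ⟨Finset.notMem_erase (0 : M) A, by rw [Finset.card_erase_of_mem h0, hcard]; rfl, ?_⟩
      rw [Finset.sum_erase A (f := fun a => a) rfl, hsum]
    · rintro A B ⟨hA, -⟩ ⟨hB, -⟩ h
      rw [← Finset.insert_erase hA, ← Finset.insert_erase hB, h]
    · rintro B ⟨h0, hcard, hsum⟩
      refine ⟨insert 0 B, ⟨Finset.mem_insert_self _ _, ?_, ?_⟩, Finset.erase_insert h0⟩
      · rw [Finset.card_insert_of_notMem h0, hcard]
      · rw [Finset.sum_insert h0, hsum, zero_add]
  rw [subsetSumCount, hsplit, Set.ncard_union_eq hdisj (Set.toFinite _) (Set.toFinite _), hzero]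
  rfl

theorem natCast_ne_zero_of_pos_of_lt_ringChar {R : Type*} [NonAssocSemiring R] {k : ℕ}
    (hk0 : 0 < k) (hk : k < ringChar R) : (k : R) ≠ 0 := by
  rw [Ne, CharP.cast_eq_zero_iff R (ringChar R)]
  exact Nat.not_dvd_of_pos_of_lt hk0 hk

theorem nonzeroSubsetSumCount_zero_sub_eq_neg_one_pow {F : Type*} [Field F] [Finite F] {k : ℕ}
    (hk : k < ringChar F) {α : F} (hα : α ≠ 0) :
    (nonzeroSubsetSumCount k (0 : F) : ℤ) - nonzeroSubsetSumCount k α = (-1) ^ k := by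
  classical
  induction k with
  | zero =>
    rw [nonzeroSubsetSumCount_zero_zero, nonzeroSubsetSumCount_zero_of_ne_zero hα]
    norm_num
  | succ k ih =>
    have htotal := subsetSumCount_eq_of_natCast_ne_zero
      (natCast_ne_zero_of_pos_of_lt_ringChar k.succ_pos hk) 0 α
    rw [subsetSumCount_succ, subsetSumCount_succ] at htotal
    have hprev := ih (by omega)
    rw [pow_succ]
    omega

end SubsetSum

theorem Nstar_zero_eq_general
    (p : ℕ) (hp : p.Prime) (k : ℕ) (hk2 : k ≤ p - 1)
    (α : ZMod p) (hα : α ≠ 0) :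
    (Even k → Nstar p k 0 = Nstar p k α + 1) ∧
    (Odd k → Nstar p k 0 + 1 = Nstar p k α) := by
  have := Fact.mk hp
  have hk : k < ringChar (ZMod p) := by
    rw [ZMod.ringChar_zmod_n]
    have hp2 := hp.two_le
    omega
  have hdiff : (Nstar p k 0 : ℤ) - Nstar p k α = (-1) ^ k :=
    nonzeroSubsetSumCount_zero_sub_eq_neg_one_pow hk hα
  refine ⟨fun heven => ?_, fun hodd => ?_⟩
  · rw [heven.neg_one_pow] at hdiff
    omega
  · rw [hodd.neg_one_pow] at hdiff
    omega

/-- For a prime `p`, `1 ≤ k ≤ p - 1`, and nonzero `α ∈ F_p`: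
if `k` is even then `N_k^*(0) = N_k^*(α) + 1`, and if `k` is odd then
`N_k^*(0) = N_k^*(α) - 1` (i.e. `N_k^*(0) + 1 = N_k^*(α)`). -/
theorem Nstar_zero_eq
    (p : ℕ) (hp : p.Prime) (k : ℕ) (hk1 : 1 ≤ k) (hk2 : k ≤ p - 1)
    (α : ZMod p) (hα : α ≠ 0) :
    (Even k → Nstar p k 0 = Nstar p k α + 1) ∧
    (Odd k → Nstar p k 0 + 1 = Nstar p k α) :=
  Nstar_zero_eq_general p hp k hk2 α hα
end
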